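/- arXiv:2208.14282 — 4 statements merged into one kernel-verified Lean document; each statement's English description precedes it below -/
import Mathlib

section
/- Let r, k be positive integers, let t1 = ξ_1 ≤ ξ_2 ≤ ⋯ ≤ ξ_{k+1} ≤ t2 be real numbers with τ_j = ξ_{j+1} − ξ_j for j = 1,…,k, let c_0,…,c_{r−1} ≥ 0 and s_1,…,s_k be reals, and define a_{j,i} by the recursion a_{0,i} = c_i for i = 0,…,r−1 and a_{j,r−p} = Σ_{i=1}^{p} a_{j−1,r−i} τ_j^{p−i}/(p−i)! + s_j τ_j^{p}/p! for p = 1,…,r and j = 1,…,k. Let α : ℝ → ℝ be a locally Lipschitz extended class-K function and let φ : ℝ → ℝ be r-times differentiable on [t1, t2]. Assume: (i) φ^{(i)}(t1) ≥ c_i for i = 0,…,r−1; (ii) for each j = 1,…,k, φ^{(r)}(t) ≥ s_j for all t ∈ [ξ_j, ξ_{j+1}]; (iii) φ^{(r)}(t) ≥ −α(φ^{(r−1)}(t) − c_{r−1}) for all t ∈ [ξ_{k+1}, t2]; (iv) for each j = 1,…,k and all t ∈ [ξ_j, ξ_{j+1}], Σ_{i=1}^{r} a_{j−1,r−i}(t−ξ_j)^{r−i}/(r−i)!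 + s_j (t−ξ_j)^{r}/r! ≥ 0; (v) a_{k,r−p} ≥ c_{r−p} for p = 1,…,r. Then φ(t) ≥ 0 for all t ∈ [t1, t2], and moreover φ^{(i)}(t) ≥ c_i for all i = 0,…,r−1 and all t ∈ [ξ_{k+1}, t2]. -/
/-!
On the `j`-th segment `[ξ_j, ξ_{j+1}]`, integrating `φ^{(r)} ≥ s_j` repeatedly, starting from
lower bounds on `φ^{(r-p)}(ξ_j)`, bounds each `φ^{(r-p)}` below by a Taylor-type polynomial in
`t - ξ_j`. Evaluated at `ξ_{j+1}` these polynomials are exactly the `a_{j,r-p}`, so by induction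
the `a_{j,·}` are lower bounds at every breakpoint, and for `p = r` condition (iv) gives `φ ≥ 0`
during the attack. By (v) all `φ^{(i)}(ξ_{k+1}) ≥ c_i`. Afterwards `ψ = φ^{(r-1)} - c_{r-1}`
satisfies `ψ' ≥ -α(ψ) ≥ 0` wherever `ψ < 0`, so it never becomes negative, and since the `c_i`
are nonnegative the bounds propagate down the chain of derivatives.
-/

open Set

/-- With `b i = a_{j-1,r-i}` and `s = s_j`, the recursion reads
`a_{j,r-p} = taylorBound b s τ_j p`, and (iv) is `0 ≤ taylorBound b s (t - ξ_j) r`. -/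
noncomputable def taylorBound (b : ℕ → ℝ) (s x : ℝ) (p : ℕ) : ℝ :=
  (∑ i ∈ Finset.Icc 1 p, b i * x ^ (p - i) / (Nat.factorial (p - i) : ℝ))
    + s * x ^ p / (Nat.factorial p : ℝ)

lemma hasDerivAt_pow_succ_div_factorial (n : ℕ) (x : ℝ) :
    HasDerivAt (fun x : ℝ => x ^ (n + 1) / (Nat.factorial (n + 1) : ℝ))
      (x ^ n / (Nat.factorial n : ℝ)) x := by
  refine ((hasDerivAt_pow (n + 1) x).div_const _).congr_deriv ?_
  rw [Nat.factorial_succ, Nat.cast_mul, Nat.add_sub_cancel]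
  field_simp

namespace taylorBound

variable (b : ℕ → ℝ) (s x : ℝ) (p : ℕ)

@[simp]
lemma zero_right : taylorBound b s x 0 = s := by
  simp [taylorBound]

lemma succ : taylorBound b s x (p + 1) = b (p + 1)
    + (∑ i ∈ Finset.Icc 1 p, b i * x ^ (p - i + 1) / (Nat.factorial (p - i + 1) : ℝ))
    + s * x ^ (p + 1) / (Nat.factorial (p + 1) : ℝ) := by
  rw [taylorBound, Finset.sum_Icc_succ_top (by omega), Nat.sub_self]
  congr 1
  rw [add_comm, Nat.factorial_zero, Nat.cast_one, pow_zero, mul_one, div_one]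
  congr 1
  refine Finset.sum_congr rfl fun i hi => ?_
  rw [Finset.mem_Icc] at hi
  rw [show p + 1 - i = p - i + 1 by omega]

@[simp]
lemma succ_zero : taylorBound b s 0 (p + 1) = b (p + 1) := by
  simp [succ]

lemma hasDerivAt_succ :
    HasDerivAt (fun x => taylorBound b s x (p + 1)) (taylorBound b s x p) x := by
  simp only [succ, mul_div_assoc]
  refine (((hasDerivAt_const x (b (p + 1))).add (HasDerivAt.fun_sum (u := Finset.Icc 1 p)
    fun i _ => (hasDerivAt_pow_succ_div_factorial (p - i) x).const_mul (b i))).add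
    ((hasDerivAt_pow_succ_div_factorial p x).const_mul s)).congr_deriv ?_
  simp [taylorBound, mul_div_assoc]

end taylorBound

lemma monotoneOn_Icc_of_hasDerivAt_nonneg {f f' : ℝ → ℝ} {a b : ℝ}
    (hf : ∀ t ∈ Icc a b, HasDerivAt f (f' t) t) (hf' : ∀ t ∈ Ioo a b, 0 ≤ f' t) :
    MonotoneOn f (Icc a b) := by
  refine monotoneOn_of_hasDerivWithinAt_nonneg (f' := f') (convex_Icc a b)
    (fun t ht => (hf t ht).continuousAt.continuousWithinAt) (fun t ht => ?_) ?_
  · rw [interior_Icc] at ht ⊢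
    exact (hf t (Ioo_subset_Icc_self ht)).hasDerivWithinAt
  · rwa [interior_Icc]

lemma nonneg_of_hasDerivAt_nonneg_of_neg {f f' : ℝ → ℝ} {a b : ℝ}
    (hf : ∀ t ∈ Icc a b, HasDerivAt f (f' t) t) (ha : 0 ≤ f a)
    (hf' : ∀ t ∈ Icc a b, f t < 0 → 0 ≤ f' t) : ∀ t ∈ Icc a b, 0 ≤ f t := by
  intro t ht
  by_contra! hft
  have hsub : Icc a t ⊆ Icc a b := Icc_subset_Icc_right ht.2
  -- the last time before `t` at which `f` is nonnegative
  obtain ⟨u, ⟨hu, hfu⟩, hmax⟩ : ∃ u, IsGreatest (Icc a t ∩ f ⁻¹' Ici 0) u := by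
    have hclosed : IsClosed (Icc a t ∩ f ⁻¹' Ici 0) :=
      ContinuousOn.preimage_isClosed_of_isClosed
        (fun x hx => (hf x (hsub hx)).continuousAt.continuousWithinAt) isClosed_Icc isClosed_Ici
    exact (isCompact_Icc.of_isClosed_subset hclosed inter_subset_left).exists_isGreatest
      ⟨a, ⟨left_mem_Icc.2 ht.1, ha⟩⟩
  have hneg : ∀ v ∈ Ioo u t, f v < 0 := fun v hv => by
    by_contra! hfv
    exact (hmax ⟨⟨hu.1.trans hv.1.le, hv.2.le⟩, hfv⟩).not_gt hv.1
  have hmono : MonotoneOn f (Icc u t) := monotoneOn_Icc_of_hasDerivAt_nonneg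
    (fun v hv => hf v (hsub ⟨hu.1.trans hv.1, hv.2⟩))
    (fun v hv => hf' v (hsub ⟨hu.1.trans hv.1.le, hv.2.le⟩) (hneg v hv))
  have := hmono (left_mem_Icc.2 hu.2) (right_mem_Icc.2 hu.2) hu.2
  exact (lt_irrefl 0) (lt_of_le_of_lt (hfu.trans this) hft)

lemma le_of_hasDerivAt_ge_neg_comp {g g' α : ℝ → ℝ} {a b c : ℝ} (hα : Monotone α)
    (hα0 : α 0 = 0) (hg : ∀ t ∈ Icc a b, HasDerivAt g (g' t) t) (ha : c ≤ g a)
    (hg' : ∀ t ∈ Icc a b, -α (g t - c) ≤ g' t) : ∀ t ∈ Icc a b, c ≤ g t := by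
  refine fun t ht => sub_nonneg.1 (nonneg_of_hasDerivAt_nonneg_of_neg
    (fun t ht => (hg t ht).sub_const c) (sub_nonneg.2 ha) (fun t ht hneg => ?_) t ht)
  have : α (g t - c) ≤ 0 := hα0 ▸ hα hneg.le
  linarith [hg' t ht]

lemma le_of_le_top_of_hasDerivAt {f : ℕ → ℝ → ℝ} {c : ℕ → ℝ} {r : ℕ} {a b : ℝ}
    (hf : ∀ i < r, ∀ t ∈ Icc a b, HasDerivAt (f i) (f (i + 1) t) t) (hc : ∀ i < r, 0 ≤ c i)
    (ha : ∀ i < r, c i ≤ f i a) (htop : ∀ t ∈ Icc a b, c (r - 1) ≤ f (r - 1) t) :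
    ∀ i < r, ∀ t ∈ Icc a b, c i ≤ f i t := by
  intro i hi
  refine Nat.decreasingInduction (motive := fun i _ => ∀ t ∈ Icc a b, c i ≤ f i t)
    (fun i hi ih t ht => ?_) htop (Nat.le_sub_one_of_lt hi)
  have hmono : MonotoneOn (f i) (Icc a b) :=
    monotoneOn_Icc_of_hasDerivAt_nonneg (hf i (by omega)) fun v hv =>
      (hc _ (by omega)).trans (ih v (Ioo_subset_Icc_self hv))
  exact (ha i (by omega)).trans (hmono (left_mem_Icc.2 (ht.1.trans ht.2)) ht ht.1)

lemma taylorBound_le_of_hasDerivAt {f : ℕ → ℝ → ℝ} {r : ℕ} {b : ℕ → ℝ} {s A B : ℝ}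
    (hf : ∀ i < r, ∀ t ∈ Icc A B, HasDerivAt (f i) (f (i + 1) t) t)
    (hA : ∀ p ∈ Finset.Icc 1 r, b p ≤ f (r - p) A) (hs : ∀ t ∈ Icc A B, s ≤ f r t) :
    ∀ p ≤ r, ∀ t ∈ Icc A B, taylorBound b s (t - A) p ≤ f (r - p) t := by
  intro p
  induction p with
  | zero => simpa using hs
  | succ p ih =>
    intro hp t ht
    have hgap : ∀ v ∈ Icc A B,
        HasDerivAt (fun v => f (r - (p + 1)) v - taylorBound b s (v - A) (p + 1))
          (f (r - p) v - taylorBound b s (v - A) p) v := fun v hv => by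
      have hfv := hf (r - (p + 1)) (by omega) v hv
      rw [show r - (p + 1) + 1 = r - p by omega] at hfv
      exact hfv.sub ((taylorBound.hasDerivAt_succ b s (v - A) p).comp_sub_const v A)
    have hmono := monotoneOn_Icc_of_hasDerivAt_nonneg hgap
      fun v hv => sub_nonneg.2 (ih (by omega) v (Ioo_subset_Icc_self hv))
    have := hmono (left_mem_Icc.2 (ht.1.trans ht.2)) ht ht.1
    simp only [sub_self, taylorBound.succ_zero] at this
    linarith [hA (p + 1) (Finset.mem_Icc.2 ⟨by omega, hp⟩)]

lemma monotoneOn_Icc_of_le_succ {α : Type*} [Preorder α] {ξ : ℕ → α} {k : ℕ}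
    (hξ : ∀ j ∈ Finset.Icc 1 k, ξ j ≤ ξ (j + 1)) : MonotoneOn ξ (Icc 1 (k + 1)) :=
  monotoneOn_of_le_succ ordConnected_Icc
    fun i _ hi hi' => hξ i (Finset.mem_Icc.2 ⟨hi.1, by simp at hi'; omega⟩)

section AttackPhase

variable {r k : ℕ} {ξ τ s : ℕ → ℝ} {a : ℕ → ℕ → ℝ} {f : ℕ → ℝ → ℝ}

lemma le_at_breakpoint (hξ : ∀ j ∈ Finset.Icc 1 k, ξ j ≤ ξ (j + 1))
    (hτ : ∀ j ∈ Finset.Icc 1 k, τ j = ξ (j + 1) - ξ j)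
    (ha : ∀ j ∈ Finset.Icc 1 k, ∀ p ∈ Finset.Icc 1 r,
      a j (r - p) = taylorBound (fun i => a (j - 1) (r - i)) (s j) (τ j) p)
    (hf : ∀ j ∈ Finset.Icc 1 k, ∀ i < r, ∀ t ∈ Icc (ξ j) (ξ (j + 1)),
      HasDerivAt (f i) (f (i + 1) t) t)
    (hinit : ∀ p ∈ Finset.Icc 1 r, a 0 (r - p) ≤ f (r - p) (ξ 1))
    (hs : ∀ j ∈ Finset.Icc 1 k, ∀ t ∈ Icc (ξ j) (ξ (j + 1)), s j ≤ f r t) :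
    ∀ j ≤ k, ∀ p ∈ Finset.Icc 1 r, a j (r - p) ≤ f (r - p) (ξ (j + 1)) := by
  intro j
  induction j with
  | zero => exact fun _ => hinit
  | succ j ih =>
    intro hj p hp
    have hj' : j + 1 ∈ Finset.Icc 1 k := Finset.mem_Icc.2 ⟨by omega, hj⟩
    rw [ha _ hj' p hp, hτ _ hj']
    exact taylorBound_le_of_hasDerivAt (hf _ hj') (ih (by omega)) (hs _ hj') p
      (Finset.mem_Icc.1 hp).2 _ (right_mem_Icc.2 (hξ _ hj'))

lemma exists_mem_segment {t : ℝ} (ht : t ∈ Ico (ξ 1) (ξ (k + 1))) :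
    ∃ j ∈ Finset.Icc 1 k, t ∈ Icc (ξ j) (ξ (j + 1)) := by
  induction k with
  | zero => exact absurd ht.2 (not_lt.2 ht.1)
  | succ k ih =>
    rcases lt_or_ge t (ξ (k + 1)) with hlt | hge
    · obtain ⟨j, hj, htj⟩ := ih ⟨ht.1, hlt⟩
      obtain ⟨hj1, hjk⟩ := Finset.mem_Icc.1 hj
      exact ⟨j, Finset.mem_Icc.2 ⟨hj1, by omega⟩, htj⟩
    · exact ⟨k + 1, Finset.mem_Icc.2 ⟨by omega, le_rfl⟩, hge, ht.2.le⟩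

end AttackPhase

theorem stmt_0_general
    (r k : ℕ) (hr : 0 < r)
    (t1 t2 : ℝ) (ξ τ s c : ℕ → ℝ) (a : ℕ → ℕ → ℝ)
    (hξ1 : ξ 1 = t1)
    (hξmono : ∀ j ∈ Finset.Icc 1 k, ξ j ≤ ξ (j + 1))
    (hξend : ξ (k + 1) ≤ t2)
    (hτ : ∀ j ∈ Finset.Icc 1 k, τ j = ξ (j + 1) - ξ j)
    (hc : ∀ i < r, 0 ≤ c i)
    (α : ℝ → ℝ) (hα_mono : StrictMono α) (hα0 : α 0 = 0)
    -- the constants a_{j,i}: a_{0,i} = c_i and the recursion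
    (ha0 : ∀ i < r, a 0 i = c i)
    (harec : ∀ j ∈ Finset.Icc 1 k, ∀ p ∈ Finset.Icc 1 r,
      a j (r - p) = (∑ i ∈ Finset.Icc 1 p,
          a (j - 1) (r - i) * τ j ^ (p - i) / (Nat.factorial (p - i) : ℝ))
        + s j * τ j ^ p / (Nat.factorial p : ℝ))
    (φ : ℝ → ℝ)
    -- φ is r-times differentiable on [t1, t2]
    (hdiff : ∀ i < r, ∀ t ∈ Set.Icc t1 t2,
      HasDerivAt (iteratedDeriv i φ) (iteratedDeriv (i + 1) φ t) t)
    -- (i) initial lower bounds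
    (h1 : ∀ i < r, iteratedDeriv i φ t1 ≥ c i)
    -- (ii) per-segment lower bound on the r-th derivative
    (h2 : ∀ j ∈ Finset.Icc 1 k, ∀ t ∈ Set.Icc (ξ j) (ξ (j + 1)),
      iteratedDeriv r φ t ≥ s j)
    -- (iii) class-K condition on [ξ_{k+1}, t2]
    (h3 : ∀ t ∈ Set.Icc (ξ (k + 1)) t2,
      iteratedDeriv r φ t ≥ - α (iteratedDeriv (r - 1) φ t - c (r - 1)))
    -- (iv) polynomial nonnegativity on each segment
    (h4 : ∀ j ∈ Finset.Icc 1 k, ∀ t ∈ Set.Icc (ξ j) (ξ (j + 1)),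
      (∑ i ∈ Finset.Icc 1 r,
          a (j - 1) (r - i) * (t - ξ j) ^ (r - i) / (Nat.factorial (r - i) : ℝ))
        + s j * (t - ξ j) ^ r / (Nat.factorial r : ℝ) ≥ 0)
    -- (v) return condition
    (h5 : ∀ p ∈ Finset.Icc 1 r, a k (r - p) ≥ c (r - p)) :
    (∀ t ∈ Set.Icc t1 t2, φ t ≥ 0) ∧
    (∀ i < r, ∀ t ∈ Set.Icc (ξ (k + 1)) t2, iteratedDeriv i φ t ≥ c i) := by
  subst hξ1
  have hξ := monotoneOn_Icc_of_le_succ hξmono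
  have hseg : ∀ j ∈ Finset.Icc 1 k, Icc (ξ j) (ξ (j + 1)) ⊆ Icc (ξ 1) t2 := fun j hj => by
    obtain ⟨hj1, hjk⟩ := Finset.mem_Icc.1 hj
    refine Icc_subset_Icc (hξ ⟨le_rfl, by omega⟩ ⟨hj1, by omega⟩ hj1) (hξend.trans' ?_)
    exact hξ ⟨by omega, by omega⟩ ⟨by omega, le_rfl⟩ (by omega)
  have hbreak := le_at_breakpoint (f := fun i => iteratedDeriv i φ) hξmono hτ harec
    (fun j hj i hi t ht => hdiff i hi t (hseg j hj ht))
    (fun p hp => (ha0 _ (by grind)).trans_le (h1 _ (by grind))) h2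
  have htail : Icc (ξ (k + 1)) t2 ⊆ Icc (ξ 1) t2 :=
    Icc_subset_Icc_left (hξ ⟨le_rfl, by omega⟩ ⟨by omega, le_rfl⟩ (by omega))
  have hreturn : ∀ i < r, c i ≤ iteratedDeriv i φ (ξ (k + 1)) := fun i hi => by
    have hp : r - i ∈ Finset.Icc 1 r := Finset.mem_Icc.2 ⟨by omega, by omega⟩
    simpa only [Nat.sub_sub_self hi.le] using (h5 _ hp).trans (hbreak k le_rfl _ hp)
  have hrecover : ∀ i < r, ∀ t ∈ Icc (ξ (k + 1)) t2, c i ≤ iteratedDeriv i φ t :=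
    le_of_le_top_of_hasDerivAt (fun i hi t ht => hdiff i hi t (htail ht)) hc hreturn
      (le_of_hasDerivAt_ge_neg_comp hα_mono.monotone hα0 (fun t ht => by
        simpa only [Nat.sub_add_cancel hr] using hdiff (r - 1) (by omega) t (htail ht))
        (hreturn _ (by omega)) h3)
  refine ⟨fun t ht => ?_, hrecover⟩
  rcases lt_or_ge t (ξ (k + 1)) with hlt | hge
  · obtain ⟨j, hj, htj⟩ := exists_mem_segment ⟨ht.1, hlt⟩
    have hj1 : j - 1 + 1 = j := Nat.sub_add_cancel (Finset.mem_Icc.1 hj).1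
    have := taylorBound_le_of_hasDerivAt (fun i hi t ht => hdiff i hi t (hseg j hj ht))
      (hj1 ▸ hbreak (j - 1) (by grind)) (h2 j hj) r le_rfl t htj
    rw [Nat.sub_self, iteratedDeriv_zero] at this
    exact (h4 j hj t htj).trans this
  · simpa using (hc 0 hr).trans (hrecover 0 hr t ⟨hge, ht.2⟩)

/-- **Theorem 1 of the paper, stated along a single trajectory.**
`φ t = h(x_t)` is the barrier value, `iteratedDeriv i φ` its `i`-th time derivative.
Under per-segment lower bounds on the `r`-th derivative, the class-K condition after
recovery, the polynomial nonnegativity conditions and the return conditions, the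
trajectory is safe on the attack cycle `[t1, t2]` and returns to the level set by
time `ξ (k+1)`. -/
theorem stmt_0
    (r k : ℕ) (hr : 0 < r) (hk : 0 < k)
    (t1 t2 : ℝ) (ξ τ s c : ℕ → ℝ) (a : ℕ → ℕ → ℝ)
    (hξ1 : ξ 1 = t1)
    (hξmono : ∀ j ∈ Finset.Icc 1 k, ξ j ≤ ξ (j + 1))
    (hξend : ξ (k + 1) ≤ t2)
    (hτ : ∀ j ∈ Finset.Icc 1 k, τ j = ξ (j + 1) - ξ j)
    (hc : ∀ i < r, 0 ≤ c i)
    (α : ℝ → ℝ) (hα_mono : StrictMono α) (hα0 : α 0 = 0)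
    (hα_lip : LocallyLipschitz α)
    -- the constants a_{j,i}: a_{0,i} = c_i and the recursion
    (ha0 : ∀ i < r, a 0 i = c i)
    (harec : ∀ j ∈ Finset.Icc 1 k, ∀ p ∈ Finset.Icc 1 r,
      a j (r - p) = (∑ i ∈ Finset.Icc 1 p,
          a (j - 1) (r - i) * τ j ^ (p - i) / (Nat.factorial (p - i) : ℝ))
        + s j * τ j ^ p / (Nat.factorial p : ℝ))
    (φ : ℝ → ℝ)
    -- φ is r-times differentiable on [t1, t2]
    (hdiff : ∀ i < r, ∀ t ∈ Set.Icc t1 t2,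
      HasDerivAt (iteratedDeriv i φ) (iteratedDeriv (i + 1) φ t) t)
    -- (i) initial lower bounds
    (h1 : ∀ i < r, iteratedDeriv i φ t1 ≥ c i)
    -- (ii) per-segment lower bound on the r-th derivative
    (h2 : ∀ j ∈ Finset.Icc 1 k, ∀ t ∈ Set.Icc (ξ j) (ξ (j + 1)),
      iteratedDeriv r φ t ≥ s j)
    -- (iii) class-K condition on [ξ_{k+1}, t2]
    (h3 : ∀ t ∈ Set.Icc (ξ (k + 1)) t2,
      iteratedDeriv r φ t ≥ - α (iteratedDeriv (r - 1) φ t - c (r - 1)))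
    -- (iv) polynomial nonnegativity on each segment
    (h4 : ∀ j ∈ Finset.Icc 1 k, ∀ t ∈ Set.Icc (ξ j) (ξ (j + 1)),
      (∑ i ∈ Finset.Icc 1 r,
          a (j - 1) (r - i) * (t - ξ j) ^ (r - i) / (Nat.factorial (r - i) : ℝ))
        + s j * (t - ξ j) ^ r / (Nat.factorial r : ℝ) ≥ 0)
    -- (v) return condition
    (h5 : ∀ p ∈ Finset.Icc 1 r, a k (r - p) ≥ c (r - p)) :
    (∀ t ∈ Set.Icc t1 t2, φ t ≥ 0) ∧
    (∀ i < r, ∀ t ∈ Set.Icc (ξ (k + 1)) t2, iteratedDeriv i φ t ≥ c i) :=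
  stmt_0_general r k hr t1 t2 ξ τ s c a hξ1 hξmono hξend hτ hc α hα_mono hα0 ha0 harec φ hdiff h1 h2
    h3 h4 h5
end

section
/- Let r be a positive integer, let c_0,…,c_{r−1} ≥ 0 be reals, let α : ℝ → ℝ be a locally Lipschitz extended class-K function, let t0 ≤ T be reals, and let y_0,…,y_{r−1} : ℝ → ℝ be differentiable on [t0, T] with y_i'(t) = y_{i+1}(t) for all t ∈ [t0, T] and 0 ≤ i ≤ r−2. If y_i(t0) ≥ c_i for all i = 0,…,r−1 and y_{r−1}'(t) ≥ −α(y_{r−1}(t) − c_{r−1}) for all t ∈ [t0, T], then y_i(t) ≥ c_i for all t ∈ [t0, T] and all i = 0,…,r−1. -/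
/-- Monotonicity from a nonnegative derivative on an interval. -/
lemma mono_aux {f f' : ℝ → ℝ} {a b : ℝ}
    (hf : ∀ t ∈ Set.Icc a b, HasDerivAt f (f' t) t)
    (h0 : ∀ t ∈ Set.Ioo a b, 0 ≤ f' t) : MonotoneOn f (Set.Icc a b) := by
  apply monotoneOn_of_deriv_nonneg (convex_Icc a b)
  · exact fun t htt => (hf t htt).continuousAt.continuousWithinAt
  · rw [interior_Icc]
    exact fun t htt =>
      ((hf t (Set.Ioo_subset_Icc_self htt)).differentiableAt).differentiableWithinAt
  · rw [interior_Icc]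
    intro t htt
    rw [(hf t (Set.Ioo_subset_Icc_self htt)).deriv]
    exact h0 t htt

/-- **Lemma 1 of the paper (forward invariance via higher-order derivatives), stated
along a trajectory.** `y i t = L_f^i h (x_t)` and `D` is the derivative of `y (r-1)`. -/
theorem stmt_1
    (r : ℕ) (hr : 0 < r) (c : ℕ → ℝ) (hc : ∀ i < r, 0 ≤ c i)
    (α : ℝ → ℝ) (hα_mono : StrictMono α) (hα0 : α 0 = 0)
    (hα_lip : LocallyLipschitz α)
    (t0 T : ℝ) (ht : t0 ≤ T)
    (y : ℕ → ℝ → ℝ) (D : ℝ → ℝ)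
    -- y_i is differentiable on [t0, T] with y_i' = y_{i+1} for 0 ≤ i ≤ r - 2
    (hchain : ∀ i, i + 1 < r → ∀ t ∈ Set.Icc t0 T, HasDerivAt (y i) (y (i + 1) t) t)
    -- y_{r-1} is differentiable on [t0, T] with derivative D
    (hlast : ∀ t ∈ Set.Icc t0 T, HasDerivAt (y (r - 1)) (D t) t)
    (hinit : ∀ i < r, y i t0 ≥ c i)
    (hineq : ∀ t ∈ Set.Icc t0 T, D t ≥ - α (y (r - 1) t - c (r - 1))) :
    ∀ i < r, ∀ t ∈ Set.Icc t0 T, y i t ≥ c i := by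
  -- Step 1: the last coordinate stays above its bound.
  have hlastge : ∀ t ∈ Set.Icc t0 T, c (r - 1) ≤ y (r - 1) t := by
    intro t1 ht1
    by_contra hneg
    push_neg at hneg
    set g : ℝ → ℝ := fun t => y (r - 1) t - c (r - 1) with hgdef
    have hgd : ∀ t ∈ Set.Icc t0 T, HasDerivAt g (D t) t :=
      fun t htt => (hlast t htt).sub_const _
    have hgt1 : g t1 < 0 := sub_neg.mpr hneg
    have hsubset : Set.Icc t0 t1 ⊆ Set.Icc t0 T :=
      Set.Icc_subset_Icc le_rfl ht1.2
    set S : Set ℝ := Set.Icc t0 t1 ∩ g ⁻¹' Set.Ici 0 with hSdef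
    have hgc : ContinuousOn g (Set.Icc t0 t1) :=
      fun t htt => (hgd t (hsubset htt)).continuousAt.continuousWithinAt
    have hSclosed : IsClosed S :=
      hgc.preimage_isClosed_of_isClosed isClosed_Icc isClosed_Ici
    have hg0 : 0 ≤ g t0 := sub_nonneg.mpr (hinit (r - 1) (by omega))
    have hSne : S.Nonempty := ⟨t0, ⟨le_rfl, ht1.1⟩, hg0⟩
    have hSbdd : BddAbove S := ⟨t1, fun x hx => hx.1.2⟩
    set s := sSup S with hsdef
    have hsS : s ∈ S := hSclosed.csSup_mem hSne hSbdd
    have hst1 : s < t1 := by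
      rcases lt_or_eq_of_le hsS.1.2 with h | h
      · exact h
      · exfalso
        have : (0 : ℝ) ≤ g t1 := by rw [← h]; exact hsS.2
        linarith
    -- on (s, t1], g is negative
    have hneg' : ∀ t ∈ Set.Ioc s t1, g t < 0 := by
      intro t htt
      by_contra hge
      push_neg at hge
      have htS : t ∈ S := ⟨⟨le_trans hsS.1.1 (le_of_lt htt.1), htt.2⟩, hge⟩
      exact absurd (le_csSup hSbdd htS) (not_le.mpr htt.1)
    -- g is monotone on [s, t1] since D ≥ -α (g t) > 0 there
    have hsubset2 : Set.Icc s t1 ⊆ Set.Icc t0 T :=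
      Set.Icc_subset_Icc hsS.1.1 ht1.2
    have hmono : MonotoneOn g (Set.Icc s t1) := by
      apply mono_aux (fun t htt => hgd t (hsubset2 htt))
      intro t htt
      have hDt := hineq t (hsubset2 (Set.Ioo_subset_Icc_self htt))
      have hgneg : g t < 0 := hneg' t ⟨htt.1, le_of_lt htt.2⟩
      have : α (g t) < α 0 := hα_mono hgneg
      rw [hα0] at this
      have : 0 < -α (y (r - 1) t - c (r - 1)) := by
        simp only [hgdef] at this ⊢; linarith
      linarith
    have := hmono (Set.left_mem_Icc.mpr (le_of_lt hst1))
      (Set.right_mem_Icc.mpr (le_of_lt hst1)) (le_of_lt hst1)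
    have : (0 : ℝ) ≤ g t1 := le_trans hsS.2 this
    linarith
  -- Step 2: downward induction.
  have key : ∀ j i, i + j + 1 = r → ∀ t ∈ Set.Icc t0 T, c i ≤ y i t := by
    intro j
    induction j with
    | zero =>
      intro i hir t htt
      have : i = r - 1 := by omega
      subst this
      exact hlastge t htt
    | succ k ih =>
      intro i hir t htt
      have hik : (i + 1) + k + 1 = r := by omega
      have hnext : ∀ t ∈ Set.Icc t0 T, c (i + 1) ≤ y (i + 1) t := ih (i + 1) hik
      have hmono : MonotoneOn (y i) (Set.Icc t0 T) := by
        apply mono_aux (hchain i (by omega))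
        intro s hs
        have := hnext s (Set.Ioo_subset_Icc_self hs)
        have := hc (i + 1) (by omega)
        linarith
      have h1 : y i t0 ≤ y i t :=
        hmono (Set.left_mem_Icc.mpr ht) htt htt.1
      have h0 : c i ≤ y i t0 := hinit i (by omega)
      linarith
  intro i hi t htt
  exact key (r - 1 - i) i (by omega) t htt
end

section
/- Let c ≥ 0, η > 0, τ > 0 and t1 ≤ t2 be reals with η + τ ≤ t2 − t1, let α : ℝ → ℝ be a locally Lipschitz extended class-K function, and let φ : ℝ → ℝ be differentiable on [t1, t2]. Assume: (i) φ(t1) ≥ c; (ii) φ'(t) ≥ −c/η for all t ∈ [t1, t1 + η]; (iii) for every t ∈ [t1 + η, t2], if φ(t) ≥ c then φ'(t) ≥ −α(φ(t) − c), and if φ(t) < c then φ'(t) ≥ c/τ. Then φ(t) ≥ 0 for all t ∈ [t1, t2], and φ(t) ≥ c for all t ∈ [t1 + η + τ, t2]. -/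
/-!
During the attack window `φ` decreases at rate at most `c / η`, so from `φ t1 ≥ c` it stays
nonnegative. Afterwards `φ` is nondecreasing wherever `φ < c`, which makes every level set
`{φ ≥ m}` with `m ≤ c` forward invariant (in particular `{φ ≥ 0}`); and as long as `φ < c` it
grows at rate at least `c / τ`, so starting from `φ ≥ 0` it reaches `c` within time `τ`.
-/

open Set

section

variable {φ D : ℝ → ℝ} {a b : ℝ}

lemma mul_sub_le_sub_of_hasDerivAt_Icc {K : ℝ} (hφ : ∀ t ∈ Icc a b, HasDerivAt φ (D t) t)
    (hK : ∀ t ∈ Ioo a b, K ≤ D t) {s t : ℝ} (hs : s ∈ Icc a b) (ht : t ∈ Icc a b)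
    (hst : s ≤ t) : K * (t - s) ≤ φ t - φ s := by
  refine (convex_Icc a b).mul_sub_le_image_sub_of_le_deriv
    (fun x hx => (hφ x hx).continuousAt.continuousWithinAt) ?_ ?_ s hs t ht hst
  · rw [interior_Icc]
    exact fun x hx => (hφ x (Ioo_subset_Icc_self hx)).differentiableAt.differentiableWithinAt
  · rw [interior_Icc]
    intro x hx
    rw [(hφ x (Ioo_subset_Icc_self hx)).deriv]
    exact hK x hx

lemma le_of_deriv_nonneg_of_lt {m : ℝ} (hφ : ∀ t ∈ Icc a b, HasDerivAt φ (D t) t)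
    (hD : ∀ t ∈ Ioo a b, φ t < m → 0 ≤ D t) (ha : m ≤ φ a) :
    ∀ t ∈ Icc a b, m ≤ φ t := by
  intro t ht
  by_contra! hlt
  have hclosed : IsClosed (Icc a t ∩ φ ⁻¹' Ici m) :=
    ContinuousOn.preimage_isClosed_of_isClosed
      (fun x hx => (hφ x ⟨hx.1, hx.2.trans ht.2⟩).continuousAt.continuousWithinAt)
      isClosed_Icc isClosed_Ici
  -- `u` is the last time in `[a, t]` at which `φ ≥ m`; on `(u, t)` we have `φ < m`.
  obtain ⟨u, ⟨⟨hau, hut⟩, hmu⟩, hlast⟩ :=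
    (isCompact_Icc.of_isClosed_subset hclosed inter_subset_left).exists_isGreatest
      ⟨a, left_mem_Icc.2 ht.1, ha⟩
  have hbelow : ∀ r ∈ Ioo u t, φ r < m := fun r hr => by
    by_contra! hr'
    exact hr.1.not_ge (hlast ⟨⟨hau.trans hr.1.le, hr.2.le⟩, hr'⟩)
  have hrise := mul_sub_le_sub_of_hasDerivAt_Icc (a := u) (b := t) (K := 0)
    (fun r hr => hφ r ⟨hau.trans hr.1, hr.2.trans ht.2⟩)
    (fun r hr => hD r ⟨hau.trans_lt hr.1, hr.2.trans_le ht.2⟩ (hbelow r hr))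
    (left_mem_Icc.2 hut) (right_mem_Icc.2 hut) hut
  have hmu : m ≤ φ u := hmu
  linarith

lemma exists_le_of_le_deriv_of_lt {m K : ℝ} (hab : a ≤ b)
    (hφ : ∀ t ∈ Icc a b, HasDerivAt φ (D t) t) (hK : ∀ t ∈ Ioo a b, φ t < m → K ≤ D t)
    (hreach : m ≤ φ a + K * (b - a)) : ∃ s ∈ Icc a b, m ≤ φ s := by
  by_contra! hlt
  have hrise := mul_sub_le_sub_of_hasDerivAt_Icc hφ
    (fun t ht => hK t ht (hlt t (Ioo_subset_Icc_self ht)))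
    (left_mem_Icc.2 hab) (right_mem_Icc.2 hab) hab
  linarith [hlt b (right_mem_Icc.2 hab)]

end

theorem stmt_2_general
    (c η τ t1 t2 : ℝ) (hc : 0 ≤ c) (hη : 0 < η) (hτ : 0 < τ)
    (hsum : η + τ ≤ t2 - t1)
    (α : ℝ → ℝ)
    (φ D : ℝ → ℝ)
    (hdiff : ∀ t ∈ Set.Icc t1 t2, HasDerivAt φ (D t) t)
    (h1 : φ t1 ≥ c)
    (h2 : ∀ t ∈ Set.Icc t1 (t1 + η), D t ≥ - c / η)
    (h3 : ∀ t ∈ Set.Icc (t1 + η) t2,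
      (φ t ≥ c → D t ≥ - α (φ t - c)) ∧ (φ t < c → D t ≥ c / τ)) :
    (∀ t ∈ Set.Icc t1 t2, φ t ≥ 0) ∧
    (∀ t ∈ Set.Icc (t1 + η + τ) t2, φ t ≥ c) := by
  have hηt2 : t1 + η ≤ t2 := by linarith
  have hτt2 : t1 + η + τ ≤ t2 := by linarith
  have hdiff_late : ∀ t ∈ Icc (t1 + η) t2, HasDerivAt φ (D t) t :=
    fun t ht => hdiff t ⟨by linarith [ht.1], ht.2⟩
  have hrise : ∀ t ∈ Ioo (t1 + η) t2, φ t < c → c / τ ≤ D t :=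
    fun t ht => (h3 t (Ioo_subset_Icc_self ht)).2
  have hsafe_attack : ∀ t ∈ Icc t1 (t1 + η), 0 ≤ φ t := by
    intro t ht
    have hdrop := mul_sub_le_sub_of_hasDerivAt_Icc (fun s hs => hdiff s ⟨hs.1, hs.2.trans hηt2⟩)
      (fun s hs => h2 s (Ioo_subset_Icc_self hs)) (left_mem_Icc.2 (by linarith)) ht ht.1
    have hloss : c / η * (t - t1) ≤ c :=
      calc c / η * (t - t1) ≤ c / η * η := by gcongr; linarith [ht.2]
        _ = c := div_mul_cancel₀ c hη.ne'
    rw [neg_div, neg_mul] at hdrop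
    linarith
  have hsafe_late : ∀ t ∈ Icc (t1 + η) t2, 0 ≤ φ t :=
    le_of_deriv_nonneg_of_lt hdiff_late
      (fun t ht hneg => (div_nonneg hc hτ.le).trans (hrise t ht (hneg.trans_le hc)))
      (hsafe_attack _ (right_mem_Icc.2 (by linarith)))
  obtain ⟨s, hs, hcs⟩ := exists_le_of_le_deriv_of_lt (K := c / τ) (by linarith)
    (fun t ht => hdiff_late t ⟨ht.1, ht.2.trans hτt2⟩)
    (fun t ht => hrise t ⟨ht.1, ht.2.trans_le hτt2⟩)
    (by rw [add_sub_cancel_left, div_mul_cancel₀ c hτ.ne']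
        linarith [hsafe_late _ (left_mem_Icc.2 hηt2)])
  have hlevel : ∀ t ∈ Icc s t2, c ≤ φ t :=
    le_of_deriv_nonneg_of_lt (fun t ht => hdiff_late t ⟨hs.1.trans ht.1, ht.2⟩)
      (fun t ht hlt => (div_nonneg hc hτ.le).trans
        (hrise t ⟨hs.1.trans_lt ht.1, ht.2⟩ hlt)) hcs
  refine ⟨fun t ht => ?_, fun t ht => hlevel t ⟨hs.2.trans ht.1, ht.2⟩⟩
  rcases le_total t (t1 + η) with h | h
  · exact hsafe_attack t ⟨ht.1, h⟩
  · exact hsafe_late t ⟨h, ht.2⟩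

/-- **Corollary 1 of the paper, stated along a trajectory.** `φ t = h(x_t)` with `h` of
relative degree one and `D` the derivative of `φ`: malicious inputs for `η` time can
decrease `φ` at rate at most `c/η`; afterwards the synthesized policy increases `φ` at
rate at least `c/τ` below the level set `{φ ≥ c}` and satisfies the class-K condition on
it. Then the system is safe on `[t1, t2]` and returns to the level set by `t1 + η + τ`. -/
theorem stmt_2
    (c η τ t1 t2 : ℝ) (hc : 0 ≤ c) (hη : 0 < η) (hτ : 0 < τ)
    (ht : t1 ≤ t2) (hsum : η + τ ≤ t2 - t1)
    (α : ℝ → ℝ) (hα_mono : StrictMono α) (hα0 : α 0 = 0)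
    (hα_lip : LocallyLipschitz α)
    (φ D : ℝ → ℝ)
    (hdiff : ∀ t ∈ Set.Icc t1 t2, HasDerivAt φ (D t) t)
    (h1 : φ t1 ≥ c)
    (h2 : ∀ t ∈ Set.Icc t1 (t1 + η), D t ≥ - c / η)
    (h3 : ∀ t ∈ Set.Icc (t1 + η) t2,
      (φ t ≥ c → D t ≥ - α (φ t - c)) ∧ (φ t < c → D t ≥ c / τ)) :
    (∀ t ∈ Set.Icc t1 t2, φ t ≥ 0) ∧
    (∀ t ∈ Set.Icc (t1 + η + τ) t2, φ t ≥ c) :=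
  stmt_2_general c η τ t1 t2 hc hη hτ hsum α φ D hdiff h1 h2 h3
end

section
/- Let r, k be positive integers, let c_0,…,c_{r−1} be reals, let τ_1,…,τ_k ≥ 0 be reals, and set ξ_{j+1} = ξ_j + τ_j for j = 1,…,k with ξ_1 fixed. For s = (s_1,…,s_k) ∈ ℝ^k define a_{0,i}(s) = c_i for i = 0,…,r−1 and a_{j,r−p}(s) = Σ_{i=1}^{p} a_{j−1,r−i}(s) τ_j^{p−i}/(p−i)! + s_j τ_j^{p}/p! for j = 1,…,k and p = 1,…,r. If s, s' ∈ ℝ^k satisfy s_j ≤ s'_j for all j, then: (a) a_{j,i}(s) ≤ a_{j,i}(s') for all j = 0,…,k and i = 0,…,r−1; (b) if for each j = 1,…,k one has Σ_{i=1}^{r} a_{j−1,r−i}(s)(t−ξ_j)^{r−i}/(r−i)! + s_j(t−ξ_j)^{r}/r! ≥ 0 for all t ∈ [ξ_j, ξ_{j+1}], then the same inequalities hold with s replaced by s'; and (c) if a_{k,r−p}(s) ≥ c_{r−p} for all p = 1,…,r, then a_{k,r−p}(s') ≥ c_{r−p} for all p = 1,…,r. -/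
open Finset

/-- Each step of the recursion, and each of the polynomial conditions, is a truncated
Taylor sum in a nonnegative variable, whose coefficients all enter with nonnegative weights. -/
theorem taylor_sum_add_le_taylor_sum_add {p : ℕ} {x σ σ' : ℝ} {b b' : ℕ → ℝ} (hx : 0 ≤ x)
    (hb : ∀ i ∈ Icc 1 p, b i ≤ b' i) (hσ : σ ≤ σ') :
    (∑ i ∈ Icc 1 p, b i * x ^ (p - i) / ((p - i).factorial : ℝ)) + σ * x ^ p / (p.factorial : ℝ)
      ≤ (∑ i ∈ Icc 1 p, b' i * x ^ (p - i) / ((p - i).factorial : ℝ))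
        + σ' * x ^ p / (p.factorial : ℝ) := by
  gcongr with i hi
  exact hb i hi

theorem recursion_coeff_mono {r k : ℕ} {c τ s s' : ℕ → ℝ} {a a' : ℕ → ℕ → ℝ}
    (hτ : ∀ j ∈ Icc 1 k, 0 ≤ τ j) (hss' : ∀ j ∈ Icc 1 k, s j ≤ s' j)
    (ha0 : ∀ i < r, a 0 i = c i) (ha'0 : ∀ i < r, a' 0 i = c i)
    (harec : ∀ j ∈ Icc 1 k, ∀ p ∈ Icc 1 r,
      a j (r - p) = (∑ i ∈ Icc 1 p, a (j - 1) (r - i) * τ j ^ (p - i) / ((p - i).factorial : ℝ))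
        + s j * τ j ^ p / (p.factorial : ℝ))
    (ha'rec : ∀ j ∈ Icc 1 k, ∀ p ∈ Icc 1 r,
      a' j (r - p) = (∑ i ∈ Icc 1 p, a' (j - 1) (r - i) * τ j ^ (p - i) / ((p - i).factorial : ℝ))
        + s' j * τ j ^ p / (p.factorial : ℝ)) :
    ∀ j ≤ k, ∀ i < r, a j i ≤ a' j i := by
  intro j
  induction j with
  | zero => intro _ i hi; rw [ha0 i hi, ha'0 i hi]
  | succ j ih =>
    intro hj i hi
    have hj1 : j + 1 ∈ Icc 1 k := mem_Icc.2 ⟨by omega, hj⟩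
    have hp : r - i ∈ Icc 1 r := mem_Icc.2 ⟨by omega, by omega⟩
    have hi_eq : r - (r - i) = i := by omega
    have h := harec (j + 1) hj1 (r - i) hp
    have h' := ha'rec (j + 1) hj1 (r - i) hp
    rw [hi_eq] at h h'
    rw [h, h']
    refine taylor_sum_add_le_taylor_sum_add (hτ _ hj1) (fun i' hi' => ?_) (hss' _ hj1)
    exact ih (by omega) (r - i') (by have := (mem_Icc.1 hi').1; omega)

theorem stmt_7_general (r k : ℕ)
    (c τ : ℕ → ℝ) (hτ : ∀ j ∈ Finset.Icc 1 k, 0 ≤ τ j)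
    (ξ : ℕ → ℝ)
    (s s' : ℕ → ℝ) (hss' : ∀ j ∈ Finset.Icc 1 k, s j ≤ s' j)
    (a a' : ℕ → ℕ → ℝ)
    (ha0 : ∀ i < r, a 0 i = c i)
    (ha'0 : ∀ i < r, a' 0 i = c i)
    (harec : ∀ j ∈ Finset.Icc 1 k, ∀ p ∈ Finset.Icc 1 r,
      a j (r - p) = (∑ i ∈ Finset.Icc 1 p,
          a (j - 1) (r - i) * τ j ^ (p - i) / (Nat.factorial (p - i) : ℝ))
        + s j * τ j ^ p / (Nat.factorial p : ℝ))
    (ha'rec : ∀ j ∈ Finset.Icc 1 k, ∀ p ∈ Finset.Icc 1 r,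
      a' j (r - p) = (∑ i ∈ Finset.Icc 1 p,
          a' (j - 1) (r - i) * τ j ^ (p - i) / (Nat.factorial (p - i) : ℝ))
        + s' j * τ j ^ p / (Nat.factorial p : ℝ)) :
    -- (a) monotonicity of the constants in s
    (∀ j ≤ k, ∀ i < r, a j i ≤ a' j i) ∧
    -- (b) the polynomial nonnegativity conditions are upward closed in s
    ((∀ j ∈ Finset.Icc 1 k, ∀ t ∈ Set.Icc (ξ j) (ξ (j + 1)),
        (∑ i ∈ Finset.Icc 1 r,
            a (j - 1) (r - i) * (t - ξ j) ^ (r - i) / (Nat.factorial (r - i) : ℝ))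
          + s j * (t - ξ j) ^ r / (Nat.factorial r : ℝ) ≥ 0) →
      (∀ j ∈ Finset.Icc 1 k, ∀ t ∈ Set.Icc (ξ j) (ξ (j + 1)),
        (∑ i ∈ Finset.Icc 1 r,
            a' (j - 1) (r - i) * (t - ξ j) ^ (r - i) / (Nat.factorial (r - i) : ℝ))
          + s' j * (t - ξ j) ^ r / (Nat.factorial r : ℝ) ≥ 0)) ∧
    -- (c) the return condition is upward closed in s
    ((∀ p ∈ Finset.Icc 1 r, a k (r - p) ≥ c (r - p)) →
      (∀ p ∈ Finset.Icc 1 r, a' k (r - p) ≥ c (r - p))) := by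
  have mono := recursion_coeff_mono hτ hss' ha0 ha'0 harec ha'rec
  refine ⟨mono, fun h j hj t ht => ?_, fun h p hp => ?_⟩
  · have hj' := mem_Icc.1 hj
    refine (h j hj t ht).trans <|
      taylor_sum_add_le_taylor_sum_add (sub_nonneg.2 ht.1) (fun i hi => ?_) (hss' j hj)
    exact mono (j - 1) (by omega) (r - i) (by have := mem_Icc.1 hi; omega)
  · have hp' := mem_Icc.1 hp
    exact (h p hp).trans (mono k le_rfl (r - p) (by omega))

/-- **Mathematical core of Lemma 2 of the paper.** The constants `a j i` defined by
the recursion `a 0 i = c i`,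
`a j (r-p) = ∑_{i=1}^p a (j-1) (r-i) τⱼ^{p-i}/(p-i)! + sⱼ τⱼ^p/p!`
are nondecreasing in the vector `s`, and hence the timing condition (2d) and return
condition (2e) of Theorem 1 are upward closed in `s`. Here `a` and `a'` are the
constants computed from `s` and `s'` respectively. -/
theorem stmt_7 (r k : ℕ) (hr : 0 < r) (hk : 0 < k)
    (c τ : ℕ → ℝ) (hτ : ∀ j ∈ Finset.Icc 1 k, 0 ≤ τ j)
    (ξ : ℕ → ℝ) (hξ : ∀ j ∈ Finset.Icc 1 k, ξ (j + 1) = ξ j + τ j)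
    (s s' : ℕ → ℝ) (hss' : ∀ j ∈ Finset.Icc 1 k, s j ≤ s' j)
    (a a' : ℕ → ℕ → ℝ)
    (ha0 : ∀ i < r, a 0 i = c i)
    (ha'0 : ∀ i < r, a' 0 i = c i)
    (harec : ∀ j ∈ Finset.Icc 1 k, ∀ p ∈ Finset.Icc 1 r,
      a j (r - p) = (∑ i ∈ Finset.Icc 1 p,
          a (j - 1) (r - i) * τ j ^ (p - i) / (Nat.factorial (p - i) : ℝ))
        + s j * τ j ^ p / (Nat.factorial p : ℝ))
    (ha'rec : ∀ j ∈ Finset.Icc 1 k, ∀ p ∈ Finset.Icc 1 r,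
      a' j (r - p) = (∑ i ∈ Finset.Icc 1 p,
          a' (j - 1) (r - i) * τ j ^ (p - i) / (Nat.factorial (p - i) : ℝ))
        + s' j * τ j ^ p / (Nat.factorial p : ℝ)) :
    -- (a) monotonicity of the constants in s
    (∀ j ≤ k, ∀ i < r, a j i ≤ a' j i) ∧
    -- (b) the polynomial nonnegativity conditions are upward closed in s
    ((∀ j ∈ Finset.Icc 1 k, ∀ t ∈ Set.Icc (ξ j) (ξ (j + 1)),
        (∑ i ∈ Finset.Icc 1 r,
            a (j - 1) (r - i) * (t - ξ j) ^ (r - i) / (Nat.factorial (r - i) : ℝ))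
          + s j * (t - ξ j) ^ r / (Nat.factorial r : ℝ) ≥ 0) →
      (∀ j ∈ Finset.Icc 1 k, ∀ t ∈ Set.Icc (ξ j) (ξ (j + 1)),
        (∑ i ∈ Finset.Icc 1 r,
            a' (j - 1) (r - i) * (t - ξ j) ^ (r - i) / (Nat.factorial (r - i) : ℝ))
          + s' j * (t - ξ j) ^ r / (Nat.factorial r : ℝ) ≥ 0)) ∧
    -- (c) the return condition is upward closed in s
    ((∀ p ∈ Finset.Icc 1 r, a k (r - p) ≥ c (r - p)) →
      (∀ p ∈ Finset.Icc 1 r, a' k (r - p) ≥ c (r - p))) :=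
  stmt_7_general r k c τ hτ ξ s s' hss' a a' ha0 ha'0 harec ha'rec
end
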